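/- arXiv:2303.07737 — 6 statements merged into one kernel-verified Lean document; each statement's English description precedes it below -/
import Mathlib

section
/- A sharp POVM {P_x}_{x∈X} on a finite-dimensional Hilbert space H with |X| = dim H is rank-one projective: each P_x is a rank-one orthogonal projection and P_x P_{x'} = δ_{x,x'} P_x. -/
/-!
Choose unit vectors `ψ x` with `P x ψ x = ψ x`. The numbers `⟨ψ x, P z ψ x⟩` are nonnegative,
sum to `⟨ψ x, ψ x⟩ = 1`, and the term `z = x` is already `1`; so every other `P y` annihilates
`ψ x`, and the `ψ x` are orthonormal. When `|X| = n` they form a basis, on which `P x` agrees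
with `|ψ x⟩⟨ψ x|`; hence `P x` is that rank-one projection and `P x P y = δ_{xy} P x`.
-/

open Matrix Finset
open scoped ComplexOrder

def IsPOVM {X : Type*} [Fintype X] {n : ℕ} (P : X → Matrix (Fin n) (Fin n) ℂ) : Prop :=
  (∀ x, (P x).PosSemidef) ∧ ∑ x, P x = 1

def IsSharp {X : Type*} [Fintype X] {n : ℕ} (P : X → Matrix (Fin n) (Fin n) ℂ) : Prop :=
  ∀ x, ∃ ψ : Fin n → ℂ, star ψ ⬝ᵥ ψ = 1 ∧ (P x).mulVec ψ = ψ

namespace Matrix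

lemma linearIndependent_of_dotProduct_eq_ite {R ι m : Type*} [CommRing R] [Fintype m]
    [DecidableEq ι] {φ ψ : ι → m → R} (h : ∀ i j, φ i ⬝ᵥ ψ j = if i = j then 1 else 0) :
    LinearIndependent R ψ := by
  refine LinearIndependent.of_comp (of φ).mulVecLin ?_
  convert Pi.linearIndependent_single_one ι R with j
  ext i
  simp [mulVec, h, Pi.single_apply]

lemma ext_of_mulVec_eq_of_span_eq_top {R ι m n : Type*} [CommSemiring R] [Fintype n]
    [DecidableEq n] {A B : Matrix m n R} {v : ι → n → R}
    (hv : Submodule.span R (Set.range v) = ⊤) (h : ∀ i, A *ᵥ v i = B *ᵥ v i) : A = B :=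
  toLin'.injective (LinearMap.ext_on_range hv h)

lemma rank_ne_zero_of_ne_zero {K m n : Type*} [Field K] [Fintype n] [DecidableEq n]
    {A : Matrix m n K} (hA : A ≠ 0) : A.rank ≠ 0 := by
  rwa [rank, Ne, Submodule.finrank_eq_zero, LinearMap.range_eq_bot, ← toLin'_apply',
    LinearEquiv.map_eq_zero_iff]

end Matrix

section POVM

variable {𝕜 : Type*} [RCLike 𝕜] {m X : Type*} [Fintype m] [DecidableEq m] [Fintype X]
  {P : X → Matrix m m 𝕜}

lemma mulVec_eq_zero_of_sum_eq_one_of_mulVec_eq_self (hpos : ∀ x, (P x).PosSemidef)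
    (hsum : ∑ x, P x = 1) {ψ : m → 𝕜} (hψ : star ψ ⬝ᵥ ψ = 1) {x y : X} (hfix : P x *ᵥ ψ = ψ)
    (hyx : y ≠ x) : P y *ᵥ ψ = 0 := by
  classical
  set q : X → 𝕜 := fun z => star ψ ⬝ᵥ (P z *ᵥ ψ)
  have hq_nonneg : ∀ z, 0 ≤ q z := fun z => (hpos z).dotProduct_mulVec_nonneg ψ
  have hq_sum : ∑ z, q z = 1 := by
    simp only [q, ← dotProduct_sum, ← sum_mulVec, hsum, one_mulVec, hψ]
  have hqx : q x = 1 := by simp only [q, hfix, hψ]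
  have hpair : q x + q y ≤ ∑ z, q z := by
    rw [← sum_pair hyx.symm]
    exact sum_le_sum_of_subset_of_nonneg (subset_univ _) fun z _ _ => hq_nonneg z
  rw [hqx, hq_sum, add_le_iff_nonpos_right] at hpair
  exact ((hpos y).dotProduct_mulVec_zero_iff ψ).mp (le_antisymm hpair (hq_nonneg y))

lemma mulVec_eq_ite_of_mulVec_eq_self [DecidableEq X] (hpos : ∀ x, (P x).PosSemidef)
    (hsum : ∑ x, P x = 1) {ψ : X → m → 𝕜} (hψ : ∀ x, star (ψ x) ⬝ᵥ ψ x = 1)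
    (hfix : ∀ x, P x *ᵥ ψ x = ψ x) (x y : X) :
    P x *ᵥ ψ y = if x = y then ψ x else 0 := by
  split_ifs with hxy
  · exact hxy ▸ hfix x
  · exact mulVec_eq_zero_of_sum_eq_one_of_mulVec_eq_self hpos hsum (hψ y) (hfix y) hxy

lemma star_dotProduct_eq_ite_of_mulVec_eq_self [DecidableEq X] (hpos : ∀ x, (P x).PosSemidef)
    (hsum : ∑ x, P x = 1) {ψ : X → m → 𝕜} (hψ : ∀ x, star (ψ x) ⬝ᵥ ψ x = 1)
    (hfix : ∀ x, P x *ᵥ ψ x = ψ x) (x y : X) :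
    star (ψ x) ⬝ᵥ ψ y = if x = y then 1 else 0 := by
  split_ifs with hxy
  · exact hxy ▸ hψ x
  · have hkill := mulVec_eq_zero_of_sum_eq_one_of_mulVec_eq_self hpos hsum (hψ x) (hfix x)
      (Ne.symm hxy)
    calc star (ψ x) ⬝ᵥ ψ y = star (ψ x) ⬝ᵥ (P y *ᵥ ψ y) := by rw [hfix]
      _ = star (P y *ᵥ ψ x) ⬝ᵥ ψ y := by
        rw [dotProduct_mulVec, star_mulVec, (hpos y).isHermitian.eq]
      _ = 0 := by rw [hkill, star_zero, zero_dotProduct]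

end POVM

/-- A sharp POVM whose outcome set has cardinality equal to the dimension is
rank-one projective. -/
theorem sharp_povm_card_eq_dim_rank_one_projective {X : Type*} [Fintype X] [DecidableEq X]
    {n : ℕ} (P : X → Matrix (Fin n) (Fin n) ℂ) (hP : IsPOVM P) (hsharp : IsSharp P)
    (hcard : Fintype.card X = n) :
    (∀ x, (P x).IsHermitian ∧ P x * P x = P x ∧ (P x).rank = 1) ∧
    (∀ x x', P x * P x' = if x = x' then P x else 0) := by
  obtain ⟨hpos, hsum⟩ := hP
  choose ψ hψ hfix using hsharp
  have hact := mulVec_eq_ite_of_mulVec_eq_self hpos hsum hψ hfix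
  have horth := star_dotProduct_eq_ite_of_mulVec_eq_self hpos hsum hψ hfix
  have hspan : Submodule.span ℂ (Set.range ψ) = ⊤ :=
    (linearIndependent_of_dotProduct_eq_ite horth).span_eq_top_of_card_eq_finrank'
      (by simpa using hcard)
  have hproj : ∀ x, P x = vecMulVec (ψ x) (star (ψ x)) := fun x =>
    ext_of_mulVec_eq_of_span_eq_top hspan fun y => by
      rw [hact, vecMulVec_mulVec, horth]
      split_ifs <;> simp
  have hmul : ∀ x x', P x * P x' = if x = x' then P x else 0 := fun x x' => by
    rw [hproj x', mul_vecMulVec, hact]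
    split_ifs with h
    · rw [h, ← hproj]
    · simp
  refine ⟨fun x => ⟨(hpos x).isHermitian, by simpa using hmul x x, ?_⟩, hmul⟩
  have hψx : ψ x ≠ 0 := fun h => by simpa [h] using hψ x
  have hPx : P x ≠ 0 := fun h => hψx (by rw [← hfix x, h, zero_mulVec])
  exact le_antisymm (hproj x ▸ rank_vecMulVec_le _ _)
    (Nat.one_le_iff_ne_zero.mpr (rank_ne_zero_of_ne_zero hPx))
end

section
/- Let {P_x}_{x∈X} be a sharp POVM on H_A with unit eigenvectors ψ_x, and {Q_x}_{x∈X} any POVM on H_B. With V : H_B → H_A ⊗ H_B given by V φ = ∑_x ψ_x ⊗ √(Q_x) φ, one has V† (P_x ⊗ 1_B) V = Q_x for every x ∈ X. Hence every sharp POVM is preprocessing cleaner than any POVM with the same outcome set. -/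
open Matrix Finset
open scoped ComplexOrder Kronecker

def IsCPMap {a b : ℕ} (Φ : Matrix (Fin a) (Fin a) ℂ →ₗ[ℂ] Matrix (Fin b) (Fin b) ℂ) : Prop :=
  ∃ (k : ℕ) (K : Fin k → Matrix (Fin b) (Fin a) ℂ), ∀ M, Φ M = ∑ i, K i * M * (K i)ᴴ

/-! A sharp POVM has `P_y ψ_x = 0` for `y ≠ x` (the expectations of `P_z` in `ψ_x` are
nonnegative and sum to `1 = ⟨ψ_x, P_x ψ_x⟩`), hence `⟨ψ_y, P_x ψ_z⟩ = δ_{xy} δ_{xz}`. Expanding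
`V† (P_x ⊗ 1) V` over both sums in `V` therefore leaves only `√Q_x† √Q_x = Q_x`. The map
`M ↦ V† (M ⊗ 1) V` is completely positive, its Kraus operators being the blocks of `V†`, and it
is unital because it sends `1 = ∑ P_x` to `∑ Q_x = 1`. -/

namespace Matrix

variable {𝕜 m n k X : Type*} [RCLike 𝕜] [Fintype m] [Fintype n]

lemma IsHermitian.eigenvectorUnitary_mul_diagonal_mul_star [DecidableEq n] {A : Matrix n n 𝕜}
    (hA : A.IsHermitian) (f : ℝ → ℝ) :
    (hA.eigenvectorUnitary : Matrix n n 𝕜) * diagonal (RCLike.ofReal ∘ f ∘ hA.eigenvalues) *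
      star (hA.eigenvectorUnitary : Matrix n n 𝕜) = cfc f A := by
  rw [hA.cfc_eq, IsHermitian.cfc, Unitary.conjStarAlgAut_apply]

lemma PosSemidef.conjTranspose_cfc_sqrt_mul_cfc_sqrt [DecidableEq n] {A : Matrix n n 𝕜}
    (hA : A.PosSemidef) : (cfc Real.sqrt A)ᴴ * cfc Real.sqrt A = A := by
  have hsqrt : Set.EqOn (fun t => √t * √t) id (spectrum ℝ A) := by
    rw [hA.1.spectrum_real_eq_range_eigenvalues]
    rintro _ ⟨i, rfl⟩
    exact Real.mul_self_sqrt (hA.eigenvalues_nonneg i)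
  rw [← star_eq_conjTranspose, (cfc_predicate Real.sqrt A).star_eq, ← cfc_mul .., cfc_congr hsqrt]
  exact cfc_id ℝ A hA.1

def stinespringMap [DecidableEq n] (V : Matrix (m × n) k 𝕜) : Matrix m m 𝕜 →ₗ[𝕜] Matrix k k 𝕜 where
  toFun M := Vᴴ * (M ⊗ₖ (1 : Matrix n n 𝕜)) * V
  map_add' M N := by simp only [add_kronecker, Matrix.mul_add, Matrix.add_mul]
  map_smul' c M := by simp only [smul_kronecker, Matrix.mul_smul, Matrix.smul_mul, RingHom.id_apply]

lemma stinespringMap_apply [DecidableEq n] (V : Matrix (m × n) k 𝕜) (M : Matrix m m 𝕜) :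
    stinespringMap V M = Vᴴ * (M ⊗ₖ (1 : Matrix n n 𝕜)) * V :=
  rfl

lemma stinespringMap_eq_sum [DecidableEq n] (V : Matrix (m × n) k 𝕜) (M : Matrix m m 𝕜) :
    stinespringMap V M = ∑ j, Vᴴ.submatrix id (·, j) * M * (Vᴴ.submatrix id (·, j))ᴴ := by
  ext i l
  simp only [stinespringMap_apply, mul_apply, conjTranspose_apply, kroneckerMap_apply, one_apply,
    mul_ite, mul_one, mul_zero, Fintype.sum_prod_type, Finset.sum_ite_eq', Finset.mem_univ,
    if_true, Finset.sum_mul, conjTranspose_submatrix, conjTranspose_conjTranspose,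
    Matrix.sum_apply, submatrix_apply, id_eq]
  exact Finset.sum_comm

/-- The operator `φ ↦ ψ ⊗ S φ` from `𝕜ᵏ` to `𝕜ᵐ ⊗ 𝕜ⁿ`. -/
def vecKronecker (ψ : m → 𝕜) (S : Matrix n k 𝕜) : Matrix (m × n) k 𝕜 :=
  of fun p j => ψ p.1 * S p.2 j

lemma conjTranspose_vecKronecker_mul_kronecker_one_mul_vecKronecker [Fintype k] [DecidableEq n]
    (ψ φ : m → 𝕜) (S T : Matrix n k 𝕜) (M : Matrix m m 𝕜) :
    (vecKronecker ψ S)ᴴ * (M ⊗ₖ (1 : Matrix n n 𝕜)) * vecKronecker φ T =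
      (star ψ ⬝ᵥ M *ᵥ φ) • (Sᴴ * T) := by
  ext i l
  simp only [vecKronecker, mul_apply, conjTranspose_apply, of_apply, star_mul',
    kroneckerMap_apply, one_apply, mul_ite, mul_one, mul_zero, Fintype.sum_prod_type,
    Finset.sum_ite_eq', Finset.mem_univ, if_true, Finset.sum_mul, dotProduct, Pi.star_apply,
    mulVec, Finset.mul_sum, smul_apply, smul_eq_mul]
  rw [Finset.sum_comm]
  refine Finset.sum_congr rfl fun j _ => ?_
  rw [Finset.sum_comm]
  exact Finset.sum_congr rfl fun a _ => Finset.sum_congr rfl fun a' _ => by ring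

lemma stinespringMap_sum_vecKronecker [Fintype k] [Fintype X] [DecidableEq n]
    (ψ : X → m → 𝕜) (S : X → Matrix n k 𝕜) (M : Matrix m m 𝕜) :
    stinespringMap (∑ x, vecKronecker (ψ x) (S x)) M =
      ∑ y, ∑ z, (star (ψ y) ⬝ᵥ M *ᵥ ψ z) • ((S y)ᴴ * S z) := by
  simp only [stinespringMap_apply, conjTranspose_sum, Matrix.sum_mul, Matrix.mul_sum,
    conjTranspose_vecKronecker_mul_kronecker_one_mul_vecKronecker]
  exact Finset.sum_comm

end Matrix

lemma isCPMap_stinespringMap {a b : ℕ} {n : Type*} [Fintype n] [DecidableEq n]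
    (V : Matrix (Fin a × n) (Fin b) ℂ) : IsCPMap (stinespringMap V) := by
  refine ⟨Fintype.card n, fun i => Vᴴ.submatrix id (·, (Fintype.equivFin n).symm i), fun M => ?_⟩
  rw [stinespringMap_eq_sum]
  exact (Equiv.sum_comp (Fintype.equivFin n).symm _).symm

namespace IsPOVM

variable {X : Type*} [Fintype X] [DecidableEq X] {n : ℕ} {P : X → Matrix (Fin n) (Fin n) ℂ}

lemma mulVec_eq_zero_of_mulVec_eq_self (hP : IsPOVM P) {x y : X} {v : Fin n → ℂ}
    (hx : P x *ᵥ v = v) (hyx : y ≠ x) : P y *ᵥ v = 0 := by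
  have hsum : ∑ z, star v ⬝ᵥ P z *ᵥ v = star v ⬝ᵥ P x *ᵥ v := by
    rw [hx, ← dotProduct_sum, ← sum_mulVec, hP.2, one_mulVec]
  have hrest : ∑ z ∈ Finset.univ.erase x, star v ⬝ᵥ P z *ᵥ v = 0 := by
    rw [← Finset.sum_erase_add _ _ (Finset.mem_univ x), add_eq_right] at hsum
    exact hsum
  have hy : star v ⬝ᵥ P y *ᵥ v = 0 :=
    (Finset.sum_eq_zero_iff_of_nonneg fun z _ => (hP.1 z).dotProduct_mulVec_nonneg v).mp hrest y
      (Finset.mem_erase.mpr ⟨hyx, Finset.mem_univ y⟩)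
  exact ((hP.1 y).dotProduct_mulVec_zero_iff v).mp hy

lemma dotProduct_mulVec_eq_ite (hP : IsPOVM P) {ψ : X → Fin n → ℂ}
    (hunit : ∀ x, star (ψ x) ⬝ᵥ ψ x = 1) (heig : ∀ x, P x *ᵥ ψ x = ψ x) (x y z : X) :
    star (ψ y) ⬝ᵥ P x *ᵥ ψ z = if y = x ∧ z = x then 1 else 0 := by
  obtain rfl | hzx := eq_or_ne z x
  · obtain rfl | hyz := eq_or_ne y z
    · simp [heig, hunit]
    · rw [dotProduct_mulVec, ← (hP.1 z).1.eq, ← star_mulVec,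
        hP.mulVec_eq_zero_of_mulVec_eq_self (heig y) hyz.symm]
      simp [hyz]
  · simp [hP.mulVec_eq_zero_of_mulVec_eq_self (heig z) hzx.symm, hzx]

end IsPOVM

/-- With V φ = ∑_x ψ_x ⊗ √(Q_x) φ one has V† (P_x ⊗ 1) V = Q_x; hence every
sharp POVM is preprocessing cleaner than any POVM with the same outcome set. -/
theorem sharp_povm_preprocessing_cleaner {X : Type*} [Fintype X] {a b : ℕ}
    (P : X → Matrix (Fin a) (Fin a) ℂ) (hP : IsPOVM P)
    (Q : X → Matrix (Fin b) (Fin b) ℂ) (hQ : IsPOVM Q)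
    (ψ : X → Fin a → ℂ)
    (hunit : ∀ x, star (ψ x) ⬝ᵥ ψ x = 1)
    (heig : ∀ x, (P x).mulVec (ψ x) = ψ x)
    (V : Matrix (Fin a × Fin b) (Fin b) ℂ)
    (hV : ∀ p k, V p k = ∑ x, ψ x p.1 * (((hQ.1 x).1.eigenvectorUnitary : Matrix (Fin b) (Fin b) ℂ) *
      diagonal (((↑) : ℝ → ℂ) ∘ Real.sqrt ∘ (hQ.1 x).1.eigenvalues) *
      star ((hQ.1 x).1.eigenvectorUnitary : Matrix (Fin b) (Fin b) ℂ)) p.2 k) :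
    (∀ x, Vᴴ * (P x ⊗ₖ (1 : Matrix (Fin b) (Fin b) ℂ)) * V = Q x) ∧
    ∃ E : Matrix (Fin a) (Fin a) ℂ →ₗ[ℂ] Matrix (Fin b) (Fin b) ℂ,
      IsCPMap E ∧ E 1 = 1 ∧ ∀ x, E (P x) = Q x := by
  classical
  have hsqrt x := (hQ.1 x).1.eigenvectorUnitary_mul_diagonal_mul_star Real.sqrt
  have hVsum : V = ∑ x, vecKronecker (ψ x) (cfc Real.sqrt (Q x)) := by
    ext p j
    simp only [hV, ← RCLike.ofReal_eq_complex_ofReal, hsqrt, Matrix.sum_apply, vecKronecker, of_apply]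
  have hcompress x : stinespringMap V (P x) = Q x := by
    rw [hVsum, stinespringMap_sum_vecKronecker]
    simp only [hP.dotProduct_mulVec_eq_ite hunit heig, ite_and, ite_smul, one_smul, zero_smul,
      Finset.sum_ite_irrel, Finset.sum_const_zero, Finset.sum_ite_eq', Finset.mem_univ, if_true]
    exact (hQ.1 x).conjTranspose_cfc_sqrt_mul_cfc_sqrt
  refine ⟨hcompress, stinespringMap V, isCPMap_stinespringMap V, ?_, hcompress⟩
  rw [← hP.2, map_sum]
  simp only [hcompress, hQ.2]
end

section
/- Let Φ : B(H_A) → B(H_B) be a positive unit-preserving linear map between finite-dimensional operator algebras, and let P be a positive semidefinite contraction on H_A (0 ≤ P ≤ 1). If Φ(P) has 1 as an eigenvalue, then P has 1 as an eigenvalue. -/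
/-!
If `1` is not an eigenvalue of the Hermitian contraction `P`, its eigenvalues are all at most
some `μ < 1`, so `P ≤ μ • 1` in the Loewner order. A positive unital map preserves this bound,
`Φ P ≤ μ • 1`, which is impossible when `Φ P` fixes a unit vector.
-/

open Matrix Finset
open scoped ComplexOrder

def IsPosMap {a b : ℕ} (Φ : Matrix (Fin a) (Fin a) ℂ →ₗ[ℂ] Matrix (Fin b) (Fin b) ℂ) : Prop :=
  ∀ A : Matrix (Fin a) (Fin a) ℂ, A.PosSemidef → (Φ A).PosSemidef

open scoped MatrixOrder

lemma OrthonormalBasis.star_dotProduct_self_eq_one {ι n 𝕜 : Type*} [Fintype ι] [Fintype n]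
    [RCLike 𝕜] (b : OrthonormalBasis ι 𝕜 (EuclideanSpace 𝕜 n)) (i : ι) :
    star ⇑(b i) ⬝ᵥ ⇑(b i) = 1 := by
  rw [dotProduct_comm, ← EuclideanSpace.inner_eq_star_dotProduct, inner_self_eq_norm_sq_to_K]
  simp

namespace Matrix

variable {n 𝕜 : Type*} [Fintype n] [RCLike 𝕜] {A : Matrix n n 𝕜}

lemma IsHermitian.le_algebraMap_iff_eigenvalues_le [DecidableEq n] (hA : A.IsHermitian)
    {μ : ℝ} : A ≤ algebraMap ℝ _ μ ↔ ∀ i, hA.eigenvalues i ≤ μ := by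
  rw [le_algebraMap_iff_spectrum_le hA.isSelfAdjoint, hA.spectrum_real_eq_range_eigenvalues,
    Set.forall_mem_range]

lemma one_le_of_le_algebraMap_of_mulVec_eq_self [DecidableEq n] {μ : ℝ}
    (hA : A ≤ algebraMap ℝ _ μ) {v : n → 𝕜} (hv : star v ⬝ᵥ v = 1) (hAv : A *ᵥ v = v) : 1 ≤ μ := by
  have hquad := (le_iff.1 hA).dotProduct_mulVec_nonneg v
  rwa [Algebra.algebraMap_eq_smul_one, sub_mulVec, smul_mulVec, one_mulVec, hAv, dotProduct_sub,
    dotProduct_smul, hv, RCLike.real_smul_eq_coe_mul, mul_one, ← RCLike.ofReal_one,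
    ← RCLike.ofReal_sub, RCLike.ofReal_nonneg, sub_nonneg] at hquad

end Matrix

lemma IsPosMap.map_le_algebraMap {a b : ℕ}
    {Φ : Matrix (Fin a) (Fin a) ℂ →ₗ[ℂ] Matrix (Fin b) (Fin b) ℂ} (hΦ : IsPosMap Φ)
    (hunital : Φ 1 = 1) {A : Matrix (Fin a) (Fin a) ℂ} {μ : ℝ} (hA : A ≤ algebraMap ℝ _ μ) :
    Φ A ≤ algebraMap ℝ _ μ := by
  have hgap := hΦ _ (le_iff.1 hA)
  rwa [map_sub, Algebra.algebraMap_eq_smul_one, LinearMap.map_smul_of_tower, hunital,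
    ← Algebra.algebraMap_eq_smul_one] at hgap

theorem pos_unital_map_eigenvalue_one_general {a b : ℕ}
    (Φ : Matrix (Fin a) (Fin a) ℂ →ₗ[ℂ] Matrix (Fin b) (Fin b) ℂ)
    (hpos : IsPosMap Φ) (hunital : Φ 1 = 1)
    (P : Matrix (Fin a) (Fin a) ℂ)
    (hPle : ((1 : Matrix (Fin a) (Fin a) ℂ) - P).PosSemidef)
    (φ : Fin b → ℂ) (hφ : star φ ⬝ᵥ φ = 1) (hfix : (Φ P).mulVec φ = φ) :
    ∃ ψ : Fin a → ℂ, star ψ ⬝ᵥ ψ = 1 ∧ P.mulVec ψ = ψ := by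
  have hP : P.IsHermitian := by simpa using isHermitian_one.sub hPle.isHermitian
  by_cases heig : ∃ i, hP.eigenvalues i = 1
  · obtain ⟨i, hi⟩ := heig
    exact ⟨_, hP.eigenvectorBasis.star_dotProduct_self_eq_one i,
      by simp [hP.mulVec_eigenvectorBasis, hi]⟩
  have hlt : ∀ i, hP.eigenvalues i < 1 := fun i =>
    (hP.le_algebraMap_iff_eigenvalues_le.1 (by rwa [map_one]) i).lt_of_ne fun h => heig ⟨i, h⟩
  -- finitely many reals below `1` have a common upper bound below `1`, as `Iio 1` is directed
  obtain ⟨⟨μ, hμ⟩, hPμ⟩ := Finite.exists_le fun i => (⟨_, hlt i⟩ : Set.Iio (1 : ℝ))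
  have h1μ := one_le_of_le_algebraMap_of_mulVec_eq_self
    (hpos.map_le_algebraMap hunital (hP.le_algebraMap_iff_eigenvalues_le.2 hPμ)) hφ hfix
  exact absurd hμ h1μ.not_gt

/-- A positive unit-preserving map cannot create the eigenvalue 1 for a positive
semidefinite contraction: if Φ(P) has 1 as an eigenvalue, so does P. -/
theorem pos_unital_map_eigenvalue_one {a b : ℕ}
    (Φ : Matrix (Fin a) (Fin a) ℂ →ₗ[ℂ] Matrix (Fin b) (Fin b) ℂ)
    (hpos : IsPosMap Φ) (hunital : Φ 1 = 1)
    (P : Matrix (Fin a) (Fin a) ℂ) (hP : P.PosSemidef)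
    (hPle : ((1 : Matrix (Fin a) (Fin a) ℂ) - P).PosSemidef)
    (φ : Fin b → ℂ) (hφ : star φ ⬝ᵥ φ = 1) (hfix : (Φ P).mulVec φ = φ) :
    ∃ ψ : Fin a → ℂ, star ψ ⬝ᵥ ψ = 1 ∧ P.mulVec ψ = ψ :=
  pos_unital_map_eigenvalue_one_general Φ hpos hunital P hPle φ hφ hfix
end

section
/- If a POVM {P_x}_{x∈X} on H_A is preprocessing cleaner than every POVM {Q_x}_{x∈X} on any finite-dimensional H_B with the same outcome set X, then {P_x}_{x∈X} is sharp. -/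
/-!
Test the POVM against the deterministic POVM `Q = Pi.single x 1` on `ℂ¹`. A unital
CP map `E` with `E (P x) = 1` has Kraus rows `wᵢ` with `∑ ‖wᵢ‖² = 1 = ∑ ⟪wᵢ, P x wᵢ⟫`, so
`∑ ⟪wᵢ, (1 - P x) wᵢ⟫ = 0`. As `1 - P x = ∑_{y ≠ x} P y` is positive semidefinite, every term
vanishes and each `wᵢ` is fixed by `P x`; one of them is nonzero, and its normalisation is the
required unit eigenvector.
-/

open Matrix Finset
open scoped ComplexOrder

section RCLike

variable {𝕜 : Type*} [RCLike 𝕜] {n : Type*} [Fintype n]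

lemma exists_smul_star_dotProduct_self_eq_one {v : n → 𝕜} (hv : v ≠ 0) :
    ∃ c : 𝕜, star (c • v) ⬝ᵥ (c • v) = 1 := by
  set t := star v ⬝ᵥ v
  have ht : 0 < t :=
    (dotProduct_star_self_nonneg v).lt_of_ne' (dotProduct_star_self_eq_zero.not.mpr hv)
  obtain ⟨hre, him⟩ := RCLike.pos_iff.mp ht
  have ht_real : (RCLike.re t : 𝕜) = t := RCLike.ext (by simp) (by simp [him])
  refine ⟨((√(RCLike.re t))⁻¹ : ℝ), ?_⟩
  rw [star_smul, smul_dotProduct, dotProduct_smul, smul_smul, smul_eq_mul, RCLike.star_def,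
    RCLike.conj_ofReal, ← RCLike.ofReal_mul, ← mul_inv, Real.mul_self_sqrt hre.le]
  change _ * t = 1
  rw [RCLike.ofReal_inv, ht_real, inv_mul_cancel₀ ht.ne']

lemma Matrix.PosSemidef.mulVec_eq_zero_of_sum_eq_zero {R : Matrix n n 𝕜} (hR : R.PosSemidef)
    {ι : Type*} [Fintype ι] {v : ι → n → 𝕜} (h : ∑ i, star (v i) ⬝ᵥ R *ᵥ v i = 0) (i : ι) :
    R *ᵥ v i = 0 :=
  (hR.dotProduct_mulVec_zero_iff _).mp <|
    (sum_eq_zero_iff_of_nonneg fun j _ => hR.dotProduct_mulVec_nonneg (v j)).mp h i (mem_univ i)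

lemma exists_unit_mulVec_eq_self [DecidableEq n] {P : Matrix n n 𝕜} (hP : (1 - P).PosSemidef)
    {ι : Type*} [Fintype ι] {v : ι → n → 𝕜} (hv : ∑ i, star (v i) ⬝ᵥ v i = 1)
    (hPv : ∑ i, star (v i) ⬝ᵥ P *ᵥ v i = 1) :
    ∃ ψ : n → 𝕜, star ψ ⬝ᵥ ψ = 1 ∧ P *ᵥ ψ = ψ := by
  have hfix (i : ι) : P *ᵥ v i = v i := by
    have h := hP.mulVec_eq_zero_of_sum_eq_zero (v := v) (by
      simp only [sub_mulVec, one_mulVec, dotProduct_sub, sum_sub_distrib, hv, hPv, sub_self]) i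
    rwa [sub_mulVec, one_mulVec, sub_eq_zero, eq_comm] at h
  obtain ⟨i, hi⟩ : ∃ i, v i ≠ 0 := by
    by_contra! h
    simp [h] at hv
  obtain ⟨c, hc⟩ := exists_smul_star_dotProduct_self_eq_one hi
  exact ⟨c • v i, hc, by rw [mulVec_smul, hfix]⟩

end RCLike

lemma Matrix.mul_mul_conjTranspose_apply_self {R m n : Type*} [NonUnitalSemiring R] [StarRing R]
    [Fintype n] (K : Matrix m n R) (M : Matrix n n R) (j : m) :
    (K * M * Kᴴ) j j = K j ⬝ᵥ M *ᵥ star (K j) := by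
  rw [Matrix.mul_assoc]
  rfl

lemma IsCPMap.exists_apply_self_eq_sum {a b : ℕ}
    {Φ : Matrix (Fin a) (Fin a) ℂ →ₗ[ℂ] Matrix (Fin b) (Fin b) ℂ} (hΦ : IsCPMap Φ) (j : Fin b) :
    ∃ (k : ℕ) (w : Fin k → Fin a → ℂ), ∀ M, Φ M j j = ∑ i, star (w i) ⬝ᵥ M *ᵥ w i := by
  obtain ⟨k, K, hK⟩ := hΦ
  exact ⟨k, fun i => star (K i j), fun M => by
    simp only [hK, Matrix.sum_apply, mul_mul_conjTranspose_apply_self, star_star]⟩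

lemma IsPOVM.posSemidef_one_sub {X : Type*} [Fintype X] {m : ℕ}
    {P : X → Matrix (Fin m) (Fin m) ℂ} (hP : IsPOVM P) (x : X) : (1 - P x).PosSemidef := by
  classical
  rw [← hP.2, ← sum_erase_eq_sub (mem_univ x)]
  exact posSemidef_sum _ fun y _ => hP.1 y

lemma isPOVM_pi_single {X : Type*} [Fintype X] [DecidableEq X] {m : ℕ} (x : X) :
    IsPOVM (Pi.single x (1 : Matrix (Fin m) (Fin m) ℂ)) := by
  refine ⟨fun y => ?_, by simp⟩
  by_cases h : y = x
  · simpa [h] using PosSemidef.one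
  · simpa [h] using PosSemidef.zero

/-- A POVM that is preprocessing cleaner than every POVM with the same outcome
set (on any finite-dimensional space) is sharp. -/
theorem preprocessing_cleanest_implies_sharp {X : Type*} [Fintype X] {n : ℕ}
    (P : X → Matrix (Fin n) (Fin n) ℂ) (hP : IsPOVM P)
    (hclean : ∀ (m : ℕ) (Q : X → Matrix (Fin m) (Fin m) ℂ), IsPOVM Q →
      ∃ E : Matrix (Fin n) (Fin n) ℂ →ₗ[ℂ] Matrix (Fin m) (Fin m) ℂ,
        IsCPMap E ∧ E 1 = 1 ∧ ∀ x, E (P x) = Q x) :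
    IsSharp P := by
  classical
  intro x
  obtain ⟨E, hE, hE_one, hE_P⟩ := hclean 1 (Pi.single x 1) (isPOVM_pi_single x)
  obtain ⟨k, w, hw⟩ := hE.exists_apply_self_eq_sum 0
  refine exists_unit_mulVec_eq_self (hP.posSemidef_one_sub x) (v := w) ?_ ?_
  · simpa [hE_one] using (hw 1).symm
  · simpa [hE_P] using (hw (P x)).symm
end

section
/- A POVM {P_x}_{x∈X} on a finite-dimensional Hilbert space H is sharp if and only if its testing region equals the entire probability simplex on X, i.e., for every probability distribution p on X there exists a density matrix ρ with Tr(P_x ρ) = p(x) for all x. -/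
/-!
If `P x` fixes a unit vector `ψ x`, then `⟪ψ x, P y ψ x⟫ = δ x y` because the nonnegative numbers
`⟪ψ x, P y ψ x⟫` sum to `‖ψ x‖² = 1`; hence the mixture `∑ p x • |ψ x⟩⟨ψ x|` realises any
distribution `p`. Conversely, a state `ρ` with `Tr (P x ρ) = 1 = Tr ρ` satisfies
`Tr ((1 - P x) ρ) = 0`, and since `1 - P x` and `ρ` are positive this forces `(1 - P x) ρ = 0`;
any nonzero column of `ρ` is then fixed by `P x`.
-/

open Matrix Finset
open scoped ComplexOrder

namespace Matrix

theorem posSemidef_one_sub_of_sum_eq_one {m X R : Type*} [DecidableEq m] [Fintype X] [Ring R]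
    [PartialOrder R] [StarRing R] [AddLeftMono R] {Q : X → Matrix m m R}
    (hQ : ∀ x, (Q x).PosSemidef) (hsum : ∑ x, Q x = 1) (x : X) : (1 - Q x).PosSemidef := by
  classical
  rw [← hsum, ← sum_erase_eq_sub (mem_univ x)]
  exact posSemidef_sum _ fun y _ => hQ y

variable {m 𝕜 : Type*} [Fintype m] [RCLike 𝕜]

theorem PosSemidef.mul_eq_zero_of_trace_mul_eq_zero {A B : Matrix m m 𝕜}
    (hA : A.PosSemidef) (hB : B.PosSemidef) (h : (A * B).trace = 0) : A * B = 0 := by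
  classical
  open scoped MatrixOrder in
  obtain ⟨C, rfl⟩ := CStarAlgebra.nonneg_iff_eq_star_mul_self.mp hA.nonneg
  open scoped MatrixOrder in
  obtain ⟨D, rfl⟩ := CStarAlgebra.nonneg_iff_eq_star_mul_self.mp hB.nonneg
  rw [star_eq_conjTranspose, star_eq_conjTranspose] at h ⊢
  -- trace (Cᴴ C Dᴴ D) = ‖C Dᴴ‖²_F
  have hCD : C * Dᴴ = 0 := by
    rw [← trace_conjTranspose_mul_self_eq_zero_iff, conjTranspose_mul, conjTranspose_conjTranspose,
      show D * Cᴴ * (C * Dᴴ) = D * (Cᴴ * C * Dᴴ) by simp only [Matrix.mul_assoc], trace_mul_comm,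
      Matrix.mul_assoc (Cᴴ * C), h]
  rw [Matrix.mul_assoc, ← Matrix.mul_assoc C, hCD, Matrix.zero_mul, Matrix.mul_zero]

theorem trace_mul_vecMulVec_star (A : Matrix m m 𝕜) (w : m → 𝕜) :
    (A * vecMulVec w (star w)).trace = star w ⬝ᵥ A *ᵥ w := by
  rw [mul_vecMulVec, trace_vecMulVec, dotProduct_comm]

theorem exists_normalized_mulVec_eq_self {A : Matrix m m 𝕜} {w : m → 𝕜} (hw : w ≠ 0)
    (hA : A *ᵥ w = w) : ∃ ψ : m → 𝕜, star ψ ⬝ᵥ ψ = 1 ∧ A *ᵥ ψ = ψ := by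
  set v : EuclideanSpace 𝕜 m := WithLp.toLp 2 w
  have hv : v ≠ 0 := by simpa [v] using hw
  refine ⟨(‖v‖⁻¹ : 𝕜) • w, ?_, by rw [mulVec_smul, hA]⟩
  have h := inner_self_eq_norm_sq_to_K (𝕜 := 𝕜) ((‖v‖⁻¹ : 𝕜) • v)
  rw [norm_smul_inv_norm hv, EuclideanSpace.inner_eq_star_dotProduct, dotProduct_comm] at h
  simpa [v] using h

theorem exists_ne_zero_mulVec_eq_self_of_mul_eq_self [DecidableEq m] {A ρ : Matrix m m 𝕜}
    (hρ : ρ ≠ 0) (h : A * ρ = ρ) : ∃ w : m → 𝕜, w ≠ 0 ∧ A *ᵥ w = w := by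
  obtain ⟨j, hj⟩ : ∃ j, ρ *ᵥ Pi.single j 1 ≠ 0 := by
    by_contra! h0
    exact hρ (ext_of_mulVec_single fun j => by rw [h0 j, zero_mulVec])
  exact ⟨_, hj, by rw [mulVec_mulVec, h]⟩

theorem exists_normalized_mulVec_eq_self_of_trace_mul_eq_one [DecidableEq m] {A ρ : Matrix m m 𝕜}
    (hA : (1 - A).PosSemidef) (hρ : ρ.PosSemidef) (htr : ρ.trace = 1)
    (h : (A * ρ).trace = 1) : ∃ ψ : m → 𝕜, star ψ ⬝ᵥ ψ = 1 ∧ A *ᵥ ψ = ψ := by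
  have hAρ : A * ρ = ρ := by
    have := hA.mul_eq_zero_of_trace_mul_eq_zero hρ <| by
      rw [sub_mul, trace_sub, one_mul, htr, h, sub_self]
    rwa [sub_mul, one_mul, sub_eq_zero, eq_comm] at this
  have hρ0 : ρ ≠ 0 := by rintro rfl; simp at htr
  obtain ⟨w, hw, hAw⟩ := exists_ne_zero_mulVec_eq_self_of_mul_eq_self hρ0 hAρ
  exact exists_normalized_mulVec_eq_self hw hAw

section ResolutionOfIdentity

variable [DecidableEq m] {X : Type*} [Fintype X] {Q : X → Matrix m m 𝕜}

theorem star_dotProduct_mulVec_eq_zero_of_mulVec_eq_self (hQ : ∀ x, (Q x).PosSemidef)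
    (hsum : ∑ x, Q x = 1) {x y : X} (hxy : y ≠ x) {ψ : m → 𝕜} (hψ : Q x *ᵥ ψ = ψ) :
    star ψ ⬝ᵥ Q y *ᵥ ψ = 0 := by
  classical
  have htotal : ∑ z, star ψ ⬝ᵥ Q z *ᵥ ψ = star ψ ⬝ᵥ Q x *ᵥ ψ := by
    simp_rw [← dotProduct_sum, ← sum_mulVec, hsum, one_mulVec, hψ]
  rw [← add_sum_erase _ _ (mem_univ x), add_eq_left] at htotal
  exact (sum_eq_zero_iff_of_nonneg fun z _ => (hQ z).dotProduct_mulVec_nonneg ψ).mp htotal y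
    (mem_erase.mpr ⟨hxy, mem_univ y⟩)

theorem exists_posSemidef_trace_eq_one_trace_mul_eq (hQ : ∀ x, (Q x).PosSemidef)
    (hsum : ∑ x, Q x = 1) {ψ : X → m → 𝕜} (hψ : ∀ x, star (ψ x) ⬝ᵥ ψ x = 1)
    (hQψ : ∀ x, Q x *ᵥ ψ x = ψ x) {p : X → ℝ} (hp0 : ∀ x, 0 ≤ p x) (hp1 : ∑ x, p x = 1) :
    ∃ ρ : Matrix m m 𝕜, ρ.PosSemidef ∧ ρ.trace = 1 ∧ ∀ x, (Q x * ρ).trace = (p x : 𝕜) := by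
  refine ⟨∑ x, p x • vecMulVec (ψ x) (star (ψ x)), ?_, ?_, fun y => ?_⟩
  · exact posSemidef_sum _ fun x _ => (posSemidef_vecMulVec_self_star _).smul (hp0 x)
  · simp only [trace_sum, trace_smul, trace_vecMulVec, dotProduct_comm _ (star _), hψ]
    rw [← sum_smul, hp1, one_smul]
  · simp only [mul_sum, mul_smul_comm, trace_sum, trace_smul, trace_mul_vecMulVec_star]
    rw [sum_eq_single y fun x _ hxy => by
        rw [star_dotProduct_mulVec_eq_zero_of_mulVec_eq_self hQ hsum hxy.symm (hQψ x), smul_zero]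
      (by simp), hQψ, hψ, RCLike.real_smul_eq_coe_mul, mul_one]

end ResolutionOfIdentity

end Matrix

/-- A POVM is sharp iff its testing region is the whole probability simplex. -/
theorem sharp_iff_testing_region_full {X : Type*} [Fintype X] {n : ℕ}
    (P : X → Matrix (Fin n) (Fin n) ℂ) (hP : IsPOVM P) :
    IsSharp P ↔
      ∀ p : X → ℝ, (∀ x, 0 ≤ p x) → ∑ x, p x = 1 →
        ∃ ρ : Matrix (Fin n) (Fin n) ℂ, ρ.PosSemidef ∧ ρ.trace = 1 ∧
          ∀ x, (P x * ρ).trace = (p x : ℂ) := by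
  classical
  obtain ⟨hPpos, hPsum⟩ := hP
  refine ⟨fun hsharp p hp0 hp1 => ?_, fun hfull x => ?_⟩
  · choose ψ hψ hPψ using hsharp
    exact exists_posSemidef_trace_eq_one_trace_mul_eq hPpos hPsum hψ hPψ hp0 hp1
  · obtain ⟨ρ, hρ, htr, hPρ⟩ := hfull (Pi.single x 1)
      (fun y => by rw [Pi.single_apply]; positivity) (Fintype.sum_pi_single' x 1)
    exact exists_normalized_mulVec_eq_self_of_trace_mul_eq_one
      (posSemidef_one_sub_of_sum_eq_one hPpos hPsum x) hρ htr (by simpa using hPρ x)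
end

section
/- If P can be transformed into Q by a fuzzifying operation (P ⪰_sharp Q), then for every reference POVM Z with the same outcome set, κ_u*(P‖Z) ≥ κ_u*(Q‖Z); i.e., the tuning degree with respect to every reference is a sharpness monotone. -/
open Matrix Finset
open scoped ComplexOrder

/-- `Sharper P Q` : there is a fuzzifying operation (CP unital preprocessing mixed
with a trivial POVM) transforming the POVM `P` into the POVM `Q`. -/
def Sharper {X : Type*} [Fintype X] {a b : ℕ}
    (P : X → Matrix (Fin a) (Fin a) ℂ) (Q : X → Matrix (Fin b) (Fin b) ℂ) : Prop :=
  ∃ (E : Matrix (Fin a) (Fin a) ℂ →ₗ[ℂ] Matrix (Fin b) (Fin b) ℂ) (μ : ℝ) (p : X → ℝ),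
    IsCPMap E ∧ E 1 = 1 ∧ 0 ≤ μ ∧ μ ≤ 1 ∧ (∀ x, 0 ≤ p x) ∧ ∑ x, p x = 1 ∧
    ∀ x, Q x = (μ : ℂ) • E (P x) + ((1 - μ : ℝ) : ℂ) • ((p x : ℂ) • 1)
noncomputable def tuningSet {X : Type*} [Fintype X] {a r : ℕ}
    (P : X → Matrix (Fin a) (Fin a) ℂ) (Z : X → Matrix (Fin r) (Fin r) ℂ) : Set ℝ :=
  {v | ∃ Q : X → Matrix (Fin r) (Fin r) ℂ, Sharper P Q ∧
        v = (1 / (r : ℝ)) * ∑ x, (Q x * Z x).trace.re}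

/-- The tuning degree κ_u*(P‖Z): the supremum of the uniform correlation with the
reference Z achievable from P via fuzzifying operations. -/
noncomputable def tuningDegree {X : Type*} [Fintype X] {a r : ℕ}
    (P : X → Matrix (Fin a) (Fin a) ℂ) (Z : X → Matrix (Fin r) (Fin r) ℂ) : ℝ :=
  sSup (tuningSet P Z)

/-! Fuzzifying operations compose, so every POVM reachable from `Q` is reachable from `P` and
the tuning set of `Q` lies inside that of `P`. Correlations between POVMs lie in `[0, 1]`, which
makes the supremum monotone, also when the smaller set is empty (`sSup ∅ = 0`). -/

lemma Matrix.PosSemidef.trace_mul_nonneg {𝕜 n : Type*} [RCLike 𝕜] [Fintype n]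
    {A B : Matrix n n 𝕜} (hA : A.PosSemidef) (hB : B.PosSemidef) : 0 ≤ (A * B).trace := by
  classical
  obtain ⟨C, rfl⟩ : ∃ C : Matrix n n 𝕜, A = star C * C := by
    open scoped MatrixOrder in exact CStarAlgebra.nonneg_iff_eq_star_mul_self.mp hA.nonneg
  rw [star_eq_conjTranspose, Matrix.mul_assoc, trace_mul_comm]
  exact (hB.mul_mul_conjTranspose_same C).trace_nonneg

lemma Matrix.PosSemidef.re_trace_mul_nonneg {n : Type*} [Fintype n] {A B : Matrix n n ℂ}
    (hA : A.PosSemidef) (hB : B.PosSemidef) : 0 ≤ (A * B).trace.re :=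
  (Complex.nonneg_iff.mp (hA.trace_mul_nonneg hB)).1

namespace IsCPMap

variable {a b c : ℕ}

lemma map_posSemidef {E : Matrix (Fin a) (Fin a) ℂ →ₗ[ℂ] Matrix (Fin b) (Fin b) ℂ}
    (hE : IsCPMap E) {M : Matrix (Fin a) (Fin a) ℂ} (hM : M.PosSemidef) : (E M).PosSemidef := by
  obtain ⟨k, K, hK⟩ := hE
  rw [hK]
  exact posSemidef_sum _ fun i _ => hM.mul_mul_conjTranspose_same (K i)

lemma comp {E₁ : Matrix (Fin a) (Fin a) ℂ →ₗ[ℂ] Matrix (Fin b) (Fin b) ℂ}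
    {E₂ : Matrix (Fin b) (Fin b) ℂ →ₗ[ℂ] Matrix (Fin c) (Fin c) ℂ}
    (h₁ : IsCPMap E₁) (h₂ : IsCPMap E₂) : IsCPMap (E₂ ∘ₗ E₁) := by
  obtain ⟨k₁, K₁, hK₁⟩ := h₁
  obtain ⟨k₂, K₂, hK₂⟩ := h₂
  let K : Fin k₁ × Fin k₂ → Matrix (Fin c) (Fin a) ℂ := fun i => K₂ i.2 * K₁ i.1
  refine ⟨k₁ * k₂, K ∘ finProdFinEquiv.symm, fun M => ?_⟩
  rw [Function.comp_def, Equiv.sum_comp finProdFinEquiv.symm (fun i => K i * M * (K i)ᴴ),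
    Fintype.sum_prod_type, LinearMap.comp_apply, hK₁, map_sum]
  simp only [hK₂, K, conjTranspose_mul, Matrix.mul_assoc]

end IsCPMap

namespace IsPOVM

variable {X : Type*} [Fintype X] {n : ℕ}

lemma one_sub_posSemidef {P : X → Matrix (Fin n) (Fin n) ℂ} (hP : IsPOVM P) (x : X) :
    (1 - P x).PosSemidef := by
  classical
  rw [← hP.2, ← sum_erase_eq_sub (mem_univ x)]
  exact posSemidef_sum _ fun y _ => hP.1 y

lemma sum_re_trace_mul_nonneg {Q Z : X → Matrix (Fin n) (Fin n) ℂ} (hQ : IsPOVM Q)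
    (hZ : IsPOVM Z) : 0 ≤ ∑ x, (Q x * Z x).trace.re :=
  sum_nonneg fun x _ => (hQ.1 x).re_trace_mul_nonneg (hZ.1 x)

lemma sum_re_trace_mul_le {Q Z : X → Matrix (Fin n) (Fin n) ℂ} (hQ : IsPOVM Q)
    (hZ : IsPOVM Z) : ∑ x, (Q x * Z x).trace.re ≤ n := by
  have hle : ∀ x, (Q x * Z x).trace.re ≤ (Z x).trace.re := fun x => by
    have h := (hQ.one_sub_posSemidef x).re_trace_mul_nonneg (hZ.1 x)
    rw [Matrix.sub_mul, Matrix.one_mul, trace_sub, Complex.sub_re] at h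
    linarith
  calc ∑ x, (Q x * Z x).trace.re ≤ ∑ x, (Z x).trace.re := sum_le_sum fun x _ => hle x
    _ = n := by rw [← Complex.re_sum, ← trace_sum, hZ.2, trace_one]; simp

end IsPOVM

lemma exists_prob_mul_eq {X : Type*} [Fintype X] {p₀ w : X → ℝ} {c : ℝ}
    (hp₀ : ∀ x, 0 ≤ p₀ x) (hp₀_sum : ∑ x, p₀ x = 1) (hw : ∀ x, 0 ≤ w x) (hw_sum : ∑ x, w x = c) :
    ∃ p : X → ℝ, (∀ x, 0 ≤ p x) ∧ ∑ x, p x = 1 ∧ ∀ x, c * p x = w x := by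
  rcases (hw_sum ▸ sum_nonneg fun x _ => hw x : 0 ≤ c).eq_or_lt with rfl | hc
  · have hw0 := (Fintype.sum_eq_zero_iff_of_nonneg hw).mp hw_sum
    exact ⟨p₀, hp₀, hp₀_sum, fun x => by simp [hw0]⟩
  · refine ⟨fun x => w x / c, fun x => div_nonneg (hw x) hc.le, ?_, fun x => ?_⟩
    · rw [← sum_div, hw_sum, div_self hc.ne']
    · field_simp

namespace Sharper

variable {X : Type*} [Fintype X] {a b c : ℕ}

lemma isPOVM {P : X → Matrix (Fin a) (Fin a) ℂ} {Q : X → Matrix (Fin b) (Fin b) ℂ}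
    (h : Sharper P Q) (hP : IsPOVM P) : IsPOVM Q := by
  obtain ⟨E, μ, p, hE, hE1, hμ0, hμ1, hp0, hp1, hQ⟩ := h
  refine ⟨fun x => ?_, ?_⟩
  · rw [hQ x]
    exact ((hE.map_posSemidef (hP.1 x)).smul (by exact_mod_cast hμ0)).add
      ((PosSemidef.one.smul (by exact_mod_cast hp0 x)).smul (by exact_mod_cast sub_nonneg.2 hμ1))
  · have hp1' : ∑ x, (p x : ℂ) = 1 := by exact_mod_cast hp1
    simp only [hQ, sum_add_distrib, ← smul_sum, ← map_sum, hP.2, hE1, ← sum_smul, hp1', one_smul,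
      ← add_smul]
    push_cast
    simp

/-- Composing two fuzzifying operations: the mixing weights multiply, and the two trivial
parts merge into a single one of weight `1 - μ₂ μ₁`. -/
lemma trans {P : X → Matrix (Fin a) (Fin a) ℂ} {Q : X → Matrix (Fin b) (Fin b) ℂ}
    {R : X → Matrix (Fin c) (Fin c) ℂ} (h₁ : Sharper P Q) (h₂ : Sharper Q R) : Sharper P R := by
  obtain ⟨E₁, μ₁, p₁, hE₁, hE₁1, hμ₁0, hμ₁1, hp₁0, hp₁1, hQ⟩ := h₁
  obtain ⟨E₂, μ₂, p₂, hE₂, hE₂1, hμ₂0, hμ₂1, hp₂0, hp₂1, hR⟩ := h₂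
  obtain ⟨p, hp0, hp1, hp⟩ := exists_prob_mul_eq (c := 1 - μ₂ * μ₁) hp₂0 hp₂1
    (w := fun x => μ₂ * (1 - μ₁) * p₁ x + (1 - μ₂) * p₂ x)
    (fun x => by have := hp₁0 x; have := hp₂0 x; positivity)
    (by rw [sum_add_distrib, ← mul_sum, ← mul_sum, hp₁1, hp₂1]; ring)
  refine ⟨E₂ ∘ₗ E₁, μ₂ * μ₁, p, hE₁.comp hE₂, by simp [hE₁1, hE₂1], mul_nonneg hμ₂0 hμ₁0,
    mul_le_one₀ hμ₂1 hμ₁0 hμ₁1, hp0, hp1, fun x => ?_⟩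
  have hpx : ((1 - μ₂ * μ₁ : ℝ) : ℂ) * p x = μ₂ * (1 - μ₁) * p₁ x + (1 - μ₂) * p₂ x := by
    exact_mod_cast hp x
  rw [hR, hQ, map_add, map_smul, map_smul, map_smul, hE₂1, LinearMap.comp_apply]
  push_cast at hpx ⊢
  match_scalars
  · ring
  · linear_combination -hpx

end Sharper

section tuningSet

variable {X : Type*} [Fintype X] {a b r : ℕ}

lemma tuningSet_subset_of_sharper {P : X → Matrix (Fin a) (Fin a) ℂ}
    {Q : X → Matrix (Fin b) (Fin b) ℂ} (h : Sharper P Q) (Z : X → Matrix (Fin r) (Fin r) ℂ) :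
    tuningSet Q Z ⊆ tuningSet P Z := by
  rintro v ⟨Q', hQQ', rfl⟩
  exact ⟨Q', h.trans hQQ', rfl⟩

lemma tuningSet_subset_Icc {P : X → Matrix (Fin a) (Fin a) ℂ}
    {Z : X → Matrix (Fin r) (Fin r) ℂ} (hP : IsPOVM P) (hZ : IsPOVM Z) :
    tuningSet P Z ⊆ Set.Icc 0 1 := by
  rintro v ⟨Q, hPQ, rfl⟩
  have hQ := hPQ.isPOVM hP
  have h0 := hQ.sum_re_trace_mul_nonneg hZ
  rw [one_div_mul_eq_div]
  exact ⟨div_nonneg h0 r.cast_nonneg, div_le_one_of_le₀ (hQ.sum_re_trace_mul_le hZ) r.cast_nonneg⟩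

end tuningSet

theorem tuning_degree_monotone_general {X : Type*} [Fintype X] {a b : ℕ}
    (P : X → Matrix (Fin a) (Fin a) ℂ) (Q : X → Matrix (Fin b) (Fin b) ℂ)
    (hP : IsPOVM P) (hPQ : Sharper P Q) :
    ∀ (r : ℕ) (Z : X → Matrix (Fin r) (Fin r) ℂ), IsPOVM Z →
      tuningDegree Q Z ≤ tuningDegree P Z := by
  intro r Z hZ
  have hbounds := tuningSet_subset_Icc hP hZ
  rcases (tuningSet Q Z).eq_empty_or_nonempty with hempty | hne
  · rw [tuningDegree, hempty, Real.sSup_empty]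
    exact Real.sSup_nonneg fun v hv => (hbounds hv).1
  · exact csSup_le_csSup ⟨1, fun v hv => (hbounds hv).2⟩ hne (tuningSet_subset_of_sharper hPQ Z)

/-- The tuning degree with respect to every reference POVM is a sharpness
monotone: if P can be fuzzified into Q, then κ_u*(P‖Z) ≥ κ_u*(Q‖Z) for all Z. -/
theorem tuning_degree_monotone {X : Type*} [Fintype X] {a b : ℕ}
    (P : X → Matrix (Fin a) (Fin a) ℂ) (Q : X → Matrix (Fin b) (Fin b) ℂ)
    (hP : IsPOVM P) (hQ : IsPOVM Q) (hPQ : Sharper P Q) :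
    ∀ (r : ℕ) (Z : X → Matrix (Fin r) (Fin r) ℂ), IsPOVM Z →
      tuningDegree Q Z ≤ tuningDegree P Z :=
  tuning_degree_monotone_general P Q hP hPQ
end
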